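/- The Hilbert geometry of the open square (−1,1)² ⊆ R² is bi-Lipschitz equivalent to the Euclidean plane R²: there exists a bijection Φ : (−1,1)² → R² and a constant L ≥ 1 such that (1/L)·|Φ(p) − Φ(q)| ≤ d_{(−1,1)²}(p,q) ≤ L·|Φ(p) − Φ(q)| for all p, q, where d_{(−1,1)²} is the Hilbert distance of the square. One may take Φ(x,y) = (artanh x, artanh y) and L = 2. -/

import Mathlib

/-!
The square is the intersection of the strips `|x| < 1` and `|y| < 1`, and along every chord its
exit time is the minimum of the exit times of the two strips. The cross-ratio is antitone in the
exit times and each of its two factors is at least `1`, so the Hilbert distance of the square lies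
between the maximum and the sum of the Hilbert distances of the strips. The Hilbert distance of a
strip is that of `(-1, 1)` in the corresponding coordinate, on which `artanh` is an isometry onto
`ℝ`; comparing the maximum and the sum of the coordinates with the Euclidean norm gives `L = 2`.
-/

open scoped ENNReal
open MeasureTheory

noncomputable section

/-- Exit time of the open convex set `A` from `p` in direction `v`:
`sup {t > 0 : p + t • v ∈ A}` in `ℝ≥0∞` (so it is `∞` when the ray stays in `A`). -/
def exitTime {V : Type*} [AddCommGroup V] [Module ℝ V] (A : Set V) (p v : V) : ℝ≥0∞ :=
  ⨆ t ∈ {t : ℝ | 0 < t ∧ p + t • v ∈ A}, ENNReal.ofReal t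

/-- The Hilbert–Finsler norm `F_A(p,v) = (1/2)(1/t⁺ + 1/t⁻)`, with `1/∞ = 0`. -/
def finsler {V : Type*} [AddCommGroup V] [Module ℝ V] (A : Set V) (p v : V) : ℝ :=
  ((exitTime A p v)⁻¹ + (exitTime A p (-v))⁻¹).toReal / 2

/-- `A` contains no affine line (properness). -/
def LineFree {V : Type*} [AddCommGroup V] [Module ℝ V] (A : Set V) : Prop :=
  ¬ ∃ p v : V, v ≠ 0 ∧ ∀ t : ℝ, p + t • v ∈ A

open Classical in
/-- The Hilbert distance of `A`, written via the exit times `t⁺ = exitTime A p (q-p)`,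
`t⁻ = exitTime A p (p-q)`: the cross-ratio of `(a,p,q,b)` equals
`(t⁺/(t⁺-1)) · ((t⁻+1)/t⁻)`, factors involving a boundary point at infinity being `1`. -/
def hilbertDist {V : Type*} [AddCommGroup V] [Module ℝ V] (A : Set V) (p q : V) : ℝ :=
  if p = q then 0 else
    (1 / 2) * Real.log
      ((if exitTime A p (q - p) = ∞ then 1 else
          (exitTime A p (q - p)).toReal / ((exitTime A p (q - p)).toReal - 1)) *
       (if exitTime A p (p - q) = ∞ then 1 else
          ((exitTime A p (p - q)).toReal + 1) / (exitTime A p (p - q)).toReal))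

/-- Open ball of the Hilbert distance. -/
def hilbertBall {V : Type*} [AddCommGroup V] [Module ℝ V] (A : Set V) (p : V) (R : ℝ) :
    Set V :=
  {q ∈ A | hilbertDist A p q < R}

/-- The open square `(-1,1)²` in the Euclidean plane. -/
def square : Set (EuclideanSpace ℝ (Fin 2)) :=
  {x | ∀ i, x i ∈ Set.Ioo (-1 : ℝ) 1}

/-- `Φ(x,y) = (artanh x, artanh y)`. -/
def sqMap : EuclideanSpace ℝ (Fin 2) → EuclideanSpace ℝ (Fin 2) :=
  fun x => (WithLp.toLp 2 (fun i => (1 / 2) * Real.log ((1 + x i) / (1 - x i))) : EuclideanSpace ℝ (Fin 2))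

open Set Real Topology

section ExitTime

variable {V W : Type*} [AddCommGroup V] [Module ℝ V] [AddCommGroup W] [Module ℝ W]

theorem exitTime_preimage {F : Type*} [FunLike F V W] [LinearMapClass F ℝ V W] (f : F)
    (A : Set W) (p v : V) : exitTime (f ⁻¹' A) p v = exitTime A (f p) (f v) := by
  simp only [exitTime, mem_preimage, map_add, map_smul]

theorem exitTime_zero {A : Set V} {p : V} (hp : p ∈ A) : exitTime A p 0 = ∞ := by
  refine ENNReal.eq_top_of_forall_nnreal_le fun r => ?_
  calc (r : ℝ≥0∞) ≤ ENNReal.ofReal (r + 1) := by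
        rw [← ENNReal.ofReal_coe_nnreal]; exact ENNReal.ofReal_le_ofReal (by linarith)
    _ ≤ exitTime A p 0 :=
        le_iSup₂ (f := fun t (_ : t ∈ {t : ℝ | 0 < t ∧ p + t • (0 : V) ∈ A}) => ENNReal.ofReal t)
          (r + 1 : ℝ) ⟨by positivity, by simpa using hp⟩

theorem StarConvex.add_smul_mem_of_le {A : Set V} {p v : V} (hA : StarConvex ℝ p A)
    {s t : ℝ} (ht : p + t • v ∈ A) (hs : 0 ≤ s) (hst : s ≤ t) : p + s • v ∈ A := by
  obtain rfl | ht0 := (hs.trans hst).eq_or_lt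
  · rwa [le_antisymm hst hs]
  · simpa [smul_smul, div_mul_cancel₀ _ ht0.ne'] using
      hA.add_smul_mem ht (div_nonneg hs ht0.le) ((div_le_one ht0).2 hst)

/-- Along a ray from `p`, the times spent in sets star-convex at `p` form nested intervals. -/
theorem exitTime_inter {A B : Set V} {p : V} (hA : StarConvex ℝ p A) (hB : StarConvex ℝ p B)
    (v : V) : exitTime (A ∩ B) p v = min (exitTime A p v) (exitTime B p v) := by
  refine le_antisymm (le_min (biSup_mono fun t ht => ⟨ht.1, ht.2.1⟩)
    (biSup_mono fun t ht => ⟨ht.1, ht.2.2⟩)) (le_of_forall_lt fun c hc => ?_)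
  obtain ⟨s, ⟨hs0, hsA⟩, hcs⟩ := lt_biSup_iff.1 (hc.trans_le (min_le_left _ _))
  obtain ⟨t, ⟨ht0, htB⟩, hct⟩ := lt_biSup_iff.1 (hc.trans_le (min_le_right _ _))
  refine lt_biSup_iff.2 ⟨min s t, ⟨lt_min hs0 ht0, ?_, ?_⟩, ?_⟩
  · exact hA.add_smul_mem_of_le hsA (le_min hs0.le ht0.le) (min_le_left s t)
  · exact hB.add_smul_mem_of_le htB (le_min hs0.le ht0.le) (min_le_right s t)
  · rw [ENNReal.ofReal_min]; exact lt_min hcs hct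

variable [TopologicalSpace V] [ContinuousAdd V] [ContinuousSMul ℝ V]

theorem ofReal_lt_exitTime {A : Set V} (hA : IsOpen A) {p v : V} {t : ℝ} (ht : 0 ≤ t)
    (h : p + t • v ∈ A) : ENNReal.ofReal t < exitTime A p v := by
  have hnhds : ∀ᶠ s in 𝓝 t, p + s • v ∈ A := (hA.preimage (by fun_prop)).mem_nhds h
  obtain ⟨s, hsA, hts⟩ := (eventually_nhdsWithin_of_eventually_nhds hnhds).and
    (self_mem_nhdsWithin : ∀ᶠ s in 𝓝[>] t, t < s) |>.exists
  calc ENNReal.ofReal t < ENNReal.ofReal s :=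
        (ENNReal.ofReal_lt_ofReal_iff (ht.trans_lt hts)).2 hts
    _ ≤ exitTime A p v :=
        le_iSup₂ (f := fun t (_ : t ∈ {t : ℝ | 0 < t ∧ p + t • v ∈ A}) => ENNReal.ofReal t)
          s ⟨ht.trans_lt hts, hsA⟩

end ExitTime

section CrossRatio

/-- The cross-ratio `s / (s - 1) · (t + 1) / t` of a chord through `p` and `q = p + v`, where
`s` and `t` are the exit times from `p` in the directions `v` and `-v`. Written in `ℝ≥0∞`, it
takes the right value `1` on a factor whose exit time is infinite. -/
def hilbertCrossRatio (s t : ℝ≥0∞) : ℝ≥0∞ := (1 + (s - 1)⁻¹) * (1 + t⁻¹)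

theorem one_le_hilbertCrossRatio (s t : ℝ≥0∞) : 1 ≤ hilbertCrossRatio s t :=
  one_le_mul le_self_add le_self_add

theorem hilbertCrossRatio_ne_top {s t : ℝ≥0∞} (hs : 1 < s) (ht : 0 < t) :
    hilbertCrossRatio s t ≠ ∞ := by
  simp [hilbertCrossRatio, ENNReal.mul_eq_top, ht.ne', (tsub_pos_of_lt hs).ne']

theorem one_le_toReal_hilbertCrossRatio {s t : ℝ≥0∞} (hs : 1 < s) (ht : 0 < t) :
    1 ≤ (hilbertCrossRatio s t).toReal := by
  simpa using ENNReal.toReal_mono (hilbertCrossRatio_ne_top hs ht) (one_le_hilbertCrossRatio s t)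

theorem hilbertCrossRatio_anti {s s' t t' : ℝ≥0∞} (hs : s ≤ s') (ht : t ≤ t') :
    hilbertCrossRatio s' t' ≤ hilbertCrossRatio s t := by
  unfold hilbertCrossRatio
  gcongr

theorem hilbertCrossRatio_min_le_mul (s s' t t' : ℝ≥0∞) :
    hilbertCrossRatio (min s s') (min t t') ≤
      hilbertCrossRatio s t * hilbertCrossRatio s' t' := by
  have hs : 1 + (min s s' - 1)⁻¹ ≤ (1 + (s - 1)⁻¹) * (1 + (s' - 1)⁻¹) := by
    rcases min_choice s s' with h | h <;> rw [h]
    exacts [le_mul_of_one_le_right' le_self_add, le_mul_of_one_le_left' le_self_add]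
  have ht : 1 + (min t t')⁻¹ ≤ (1 + t⁻¹) * (1 + t'⁻¹) := by
    rcases min_choice t t' with h | h <;> rw [h]
    exacts [le_mul_of_one_le_right' le_self_add, le_mul_of_one_le_left' le_self_add]
  calc hilbertCrossRatio (min s s') (min t t')
      ≤ ((1 + (s - 1)⁻¹) * (1 + (s' - 1)⁻¹)) * ((1 + t⁻¹) * (1 + t'⁻¹)) := mul_le_mul' hs ht
    _ = hilbertCrossRatio s t * hilbertCrossRatio s' t' := mul_mul_mul_comm _ _ _ _

theorem toReal_one_add_inv_tsub_one {s : ℝ≥0∞} (hs : 1 < s) :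
    (1 + (s - 1)⁻¹).toReal = if s = ∞ then 1 else s.toReal / (s.toReal - 1) := by
  split_ifs with h
  · simp [h]
  · have h1 : 1 < s.toReal := by simpa using ENNReal.toReal_strict_mono h hs
    rw [ENNReal.toReal_add ENNReal.one_ne_top (ENNReal.inv_ne_top.2 (tsub_pos_of_lt hs).ne'),
      ENNReal.toReal_inv, ENNReal.toReal_sub_of_le hs.le h, ENNReal.toReal_one]
    field_simp [(sub_pos.2 h1).ne']
    ring

theorem toReal_one_add_inv {t : ℝ≥0∞} (ht : 0 < t) :
    (1 + t⁻¹).toReal = if t = ∞ then 1 else (t.toReal + 1) / t.toReal := by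
  split_ifs with h
  · simp [h]
  · have h0 : 0 < t.toReal := ENNReal.toReal_pos ht.ne' h
    rw [ENNReal.toReal_add ENNReal.one_ne_top (ENNReal.inv_ne_top.2 ht.ne'), ENNReal.toReal_inv,
      ENNReal.toReal_one]
    field_simp

end CrossRatio

section HilbertDist

variable {V W : Type*} [AddCommGroup V] [Module ℝ V] [AddCommGroup W] [Module ℝ W]

theorem hilbertDist_self (A : Set V) (p : V) : hilbertDist A p p = 0 := by
  simp [hilbertDist]

theorem hilbertDist_preimage {F : Type*} [FunLike F V W] [LinearMapClass F ℝ V W] (f : F)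
    {A : Set W} {p : V} (hp : f p ∈ A) (q : V) :
    hilbertDist (f ⁻¹' A) p q = hilbertDist A (f p) (f q) := by
  rcases eq_or_ne p q with rfl | hpq
  · simp only [hilbertDist_self]
  rcases eq_or_ne (f p) (f q) with hf | hf
  · rw [hilbertDist, hilbertDist, if_neg hpq, if_pos hf, exitTime_preimage, exitTime_preimage,
      map_sub, map_sub, hf, sub_self, exitTime_zero (hf ▸ hp)]
    simp
  · simp only [hilbertDist, hpq, hf, if_false, exitTime_preimage, map_sub]

variable [TopologicalSpace V] [ContinuousAdd V] [ContinuousSMul ℝ V]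

theorem one_lt_exitTime_sub {A : Set V} (hA : IsOpen A) (p : V) {q : V} (hq : q ∈ A) :
    1 < exitTime A p (q - p) := by
  simpa using ofReal_lt_exitTime hA zero_le_one (by simpa using hq)

theorem exitTime_pos {A : Set V} (hA : IsOpen A) {p : V} (hp : p ∈ A) (v : V) :
    0 < exitTime A p v := by
  simpa using ofReal_lt_exitTime hA le_rfl (by simpa using hp)

theorem hilbertDist_eq_log_hilbertCrossRatio {A : Set V} (hA : IsOpen A) {p q : V} (hp : p ∈ A)
    (hq : q ∈ A) (hpq : p ≠ q) :
    hilbertDist A p q = 1 / 2 * Real.log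
      (hilbertCrossRatio (exitTime A p (q - p)) (exitTime A p (p - q))).toReal := by
  rw [hilbertDist, if_neg hpq, hilbertCrossRatio, ENNReal.toReal_mul,
    toReal_one_add_inv_tsub_one (one_lt_exitTime_sub hA p hq),
    toReal_one_add_inv (exitTime_pos hA hp _)]

variable {A B : Set V} {p q : V}

theorem hilbertDist_le_hilbertDist_inter (hAo : IsOpen A) (hBo : IsOpen B)
    (hA : StarConvex ℝ p A) (hB : StarConvex ℝ p B) (hp : p ∈ A ∩ B) (hq : q ∈ A ∩ B) :
    hilbertDist A p q ≤ hilbertDist (A ∩ B) p q := by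
  rcases eq_or_ne p q with rfl | hpq
  · simp only [hilbertDist_self, le_refl]
  rw [hilbertDist_eq_log_hilbertCrossRatio hAo hp.1 hq.1 hpq,
    hilbertDist_eq_log_hilbertCrossRatio (hAo.inter hBo) hp hq hpq, exitTime_inter hA hB,
    exitTime_inter hA hB]
  have hsA := one_lt_exitTime_sub hAo p hq.1
  have hsB := one_lt_exitTime_sub hBo p hq.2
  have htA := exitTime_pos hAo hp.1 (p - q)
  have htB := exitTime_pos hBo hp.2 (p - q)
  have := one_le_toReal_hilbertCrossRatio hsA htA
  gcongr
  · exact hilbertCrossRatio_ne_top (lt_min hsA hsB) (lt_min htA htB)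
  · exact hilbertCrossRatio_anti (min_le_left _ _) (min_le_left _ _)

theorem hilbertDist_inter_le_add (hAo : IsOpen A) (hBo : IsOpen B)
    (hA : StarConvex ℝ p A) (hB : StarConvex ℝ p B) (hp : p ∈ A ∩ B) (hq : q ∈ A ∩ B) :
    hilbertDist (A ∩ B) p q ≤ hilbertDist A p q + hilbertDist B p q := by
  rcases eq_or_ne p q with rfl | hpq
  · simp only [hilbertDist_self, add_zero, le_refl]
  rw [hilbertDist_eq_log_hilbertCrossRatio hAo hp.1 hq.1 hpq,
    hilbertDist_eq_log_hilbertCrossRatio hBo hp.2 hq.2 hpq,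
    hilbertDist_eq_log_hilbertCrossRatio (hAo.inter hBo) hp hq hpq, exitTime_inter hA hB,
    exitTime_inter hA hB, ← mul_add]
  have hsA := one_lt_exitTime_sub hAo p hq.1
  have hsB := one_lt_exitTime_sub hBo p hq.2
  have htA := exitTime_pos hAo hp.1 (p - q)
  have htB := exitTime_pos hBo hp.2 (p - q)
  have := one_le_toReal_hilbertCrossRatio hsA htA
  have := one_le_toReal_hilbertCrossRatio hsB htB
  have := one_le_toReal_hilbertCrossRatio (lt_min hsA hsB) (lt_min htA htB)
  rw [← Real.log_mul (by positivity) (by positivity), ← ENNReal.toReal_mul]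
  gcongr
  · exact ENNReal.mul_ne_top (hilbertCrossRatio_ne_top hsA htA)
      (hilbertCrossRatio_ne_top hsB htB)
  · exact hilbertCrossRatio_min_le_mul ..

end HilbertDist

section Interval

theorem neg_preimage_Ioo (a b : ℝ) :
    (-LinearMap.id : ℝ →ₗ[ℝ] ℝ) ⁻¹' Ioo a b = Ioo (-b) (-a) := by
  ext y; simp [neg_lt, lt_neg, and_comm]

theorem exitTime_Ioo_of_pos {a b x w : ℝ} (hx : x ∈ Ioo a b) (hw : 0 < w) :
    exitTime (Ioo a b) x w = ENNReal.ofReal ((b - x) / w) := by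
  have hc : 0 < (b - x) / w := div_pos (sub_pos.2 hx.2) hw
  have hray : {t : ℝ | 0 < t ∧ x + t • w ∈ Ioo a b} = Ioo 0 ((b - x) / w) := by
    ext t
    simp only [mem_ofPred_eq, mem_Ioo, smul_eq_mul, lt_div_iff₀ hw]
    constructor
    · rintro ⟨ht, -, h⟩; exact ⟨ht, by linarith⟩
    · rintro ⟨ht, h⟩; exact ⟨ht, by nlinarith [hx.1], by linarith⟩
  rw [exitTime, hray, ← sSup_image, ← Monotone.map_csSup_of_continuousAt
    ENNReal.continuous_ofReal.continuousAt ENNReal.ofReal_mono (nonempty_Ioo.2 hc) bddAbove_Ioo,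
    csSup_Ioo hc]

theorem exitTime_Ioo_of_neg {a b x w : ℝ} (hx : x ∈ Ioo a b) (hw : w < 0) :
    exitTime (Ioo a b) x w = ENNReal.ofReal ((x - a) / -w) := by
  have hneg := exitTime_preimage (-LinearMap.id : ℝ →ₗ[ℝ] ℝ) (Ioo (-b) (-a)) x w
  rw [neg_preimage_Ioo, neg_neg, neg_neg, LinearMap.neg_apply, LinearMap.neg_apply,
    LinearMap.id_apply, LinearMap.id_apply] at hneg
  rw [hneg, exitTime_Ioo_of_pos ⟨neg_lt_neg hx.2, neg_lt_neg hx.1⟩ (neg_pos.2 hw), neg_sub_neg]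

theorem artanh_neg_eq (x : ℝ) : artanh (-x) = -artanh x := by
  rw [artanh, artanh, ← Real.log_inv, ← Real.sqrt_inv, inv_div, sub_neg_eq_add, ← sub_eq_add_neg]

theorem hilbertDist_Ioo_of_lt {x y : ℝ} (hx : x ∈ Ioo (-1 : ℝ) 1) (hy : y ∈ Ioo (-1 : ℝ) 1)
    (hxy : x < y) : hilbertDist (Ioo (-1 : ℝ) 1) x y = artanh y - artanh x := by
  have h₁ : 0 < 1 - x := by linarith [hx.2]
  have h₂ : 0 < 1 + x := by linarith [hx.1]
  have h₃ : 0 < 1 - y := by linarith [hy.2]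
  have h₄ : 0 < 1 + y := by linarith [hy.1]
  have hyx : 0 < y - x := sub_pos.2 hxy
  have hcross : (1 - x) / (y - x) / ((1 - x) / (y - x) - 1) * (((x + 1) / (y - x) + 1) /
      ((x + 1) / (y - x))) = (1 + y) / (1 - y) / ((1 + x) / (1 - x)) := by
    rw [div_sub_one hyx.ne', div_add_one hyx.ne', show 1 - x - (y - x) = 1 - y by ring,
      add_comm x 1]
    field_simp
    ring
  rw [hilbertDist, if_neg hxy.ne, exitTime_Ioo_of_pos hx hyx,
    exitTime_Ioo_of_neg hx (sub_neg.2 hxy), if_neg ENNReal.ofReal_ne_top,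
    if_neg ENNReal.ofReal_ne_top, ENNReal.toReal_ofReal (div_pos h₁ hyx).le, neg_sub,
    sub_neg_eq_add, ENNReal.toReal_ofReal (div_pos (by linarith) hyx).le, hcross,
    Real.log_div (div_pos h₄ h₃).ne' (div_pos h₂ h₁).ne',
    artanh_eq_half_log (Ioo_subset_Icc_self hx), artanh_eq_half_log (Ioo_subset_Icc_self hy)]
  ring

theorem hilbertDist_Ioo {x y : ℝ} (hx : x ∈ Ioo (-1 : ℝ) 1) (hy : y ∈ Ioo (-1 : ℝ) 1) :
    hilbertDist (Ioo (-1 : ℝ) 1) x y = dist (artanh x) (artanh y) := by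
  rw [Real.dist_eq]
  rcases lt_trichotomy x y with h | rfl | h
  · rw [hilbertDist_Ioo_of_lt hx hy h, abs_sub_comm,
      abs_of_pos (sub_pos.2 (artanh_lt_artanh hx.1 hy.2 h))]
  · simp [hilbertDist_self]
  · have hx' : -x ∈ Ioo (-1 : ℝ) 1 := ⟨by linarith [hx.2], by linarith [hx.1]⟩
    have hy' : -y ∈ Ioo (-1 : ℝ) 1 := ⟨by linarith [hy.2], by linarith [hy.1]⟩
    have hneg := hilbertDist_preimage (-LinearMap.id : ℝ →ₗ[ℝ] ℝ) (A := Ioo (-1) 1) hx' y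
    rw [neg_preimage_Ioo, neg_neg, LinearMap.neg_apply, LinearMap.neg_apply, LinearMap.id_apply,
      LinearMap.id_apply] at hneg
    rw [hneg, hilbertDist_Ioo_of_lt hx' hy' (neg_lt_neg h), artanh_neg_eq, artanh_neg_eq,
      abs_of_pos (sub_pos.2 (artanh_lt_artanh hy.1 hx.2 h))]
    ring

end Interval

theorem PiLp.dist_le_sum_dist {ι : Type*} [Fintype ι] {β : ι → Type*}
    [∀ i, SeminormedAddCommGroup (β i)] (x y : PiLp 2 β) : dist x y ≤ ∑ i, dist (x i) (y i) := by
  rw [PiLp.dist_eq_of_L2, Real.sqrt_le_left (Finset.sum_nonneg fun i _ => dist_nonneg)]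
  exact Finset.sum_sq_le_sq_sum_of_nonneg fun i _ => dist_nonneg

section Square

theorem isOpen_proj_preimage_Ioo {ι : Type*} [Fintype ι] (i : ι) (a b : ℝ) :
    IsOpen (EuclideanSpace.proj (𝕜 := ℝ) i ⁻¹' Ioo a b) :=
  isOpen_Ioo.preimage (EuclideanSpace.proj i).continuous

theorem convex_proj_preimage_Ioo {ι : Type*} [Fintype ι] (i : ι) (a b : ℝ) :
    Convex ℝ (EuclideanSpace.proj (𝕜 := ℝ) i ⁻¹' Ioo a b) :=
  (convex_Ioo a b).linear_preimage (EuclideanSpace.proj i).toLinearMap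

theorem square_eq_inter : square = EuclideanSpace.proj (𝕜 := ℝ) (0 : Fin 2) ⁻¹' Ioo (-1) 1 ∩
    EuclideanSpace.proj (𝕜 := ℝ) (1 : Fin 2) ⁻¹' Ioo (-1) 1 := by
  ext p
  simp [square, Fin.forall_fin_two]

theorem sqMap_apply {p : EuclideanSpace ℝ (Fin 2)} (hp : p ∈ square) (i : Fin 2) :
    sqMap p i = artanh (p i) :=
  (artanh_eq_half_log (Ioo_subset_Icc_self (hp i))).symm

theorem bijOn_sqMap : BijOn sqMap square univ := by
  refine ⟨fun _ _ => mem_univ _, fun p hp q hq h => ?_, fun y _ => ?_⟩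
  · ext i
    refine artanh_injOn (hp i) (hq i) ?_
    rw [← sqMap_apply hp, ← sqMap_apply hq, h]
  · have hy : WithLp.toLp 2 (fun i => tanh (y i)) ∈ square :=
      fun i => ⟨neg_one_lt_tanh _, tanh_lt_one _⟩
    refine ⟨_, hy, ?_⟩
    ext i
    rw [sqMap_apply hy]
    exact artanh_tanh (y i)

theorem hilbertDist_proj_preimage_Ioo {p q : EuclideanSpace ℝ (Fin 2)} (hp : p ∈ square)
    (hq : q ∈ square) (i : Fin 2) :
    hilbertDist (EuclideanSpace.proj (𝕜 := ℝ) i ⁻¹' Ioo (-1) 1) p q =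
      dist (sqMap p i) (sqMap q i) := by
  rw [hilbertDist_preimage _ (hp i), sqMap_apply hp, sqMap_apply hq]
  exact hilbertDist_Ioo (hp i) (hq i)

theorem hilbertDist_square_bounds {p q : EuclideanSpace ℝ (Fin 2)} (hp : p ∈ square)
    (hq : q ∈ square) :
    max (dist (sqMap p 0) (sqMap q 0)) (dist (sqMap p 1) (sqMap q 1)) ≤ hilbertDist square p q ∧
      hilbertDist square p q ≤ dist (sqMap p 0) (sqMap q 0) + dist (sqMap p 1) (sqMap q 1) := by
  simp only [← hilbertDist_proj_preimage_Ioo hp hq]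
  rw [square_eq_inter] at hp hq ⊢
  have ho₀ := isOpen_proj_preimage_Ioo (0 : Fin 2) (-1) 1
  have ho₁ := isOpen_proj_preimage_Ioo (1 : Fin 2) (-1) 1
  have hc₀ := (convex_proj_preimage_Ioo (0 : Fin 2) (-1) 1).starConvex hp.1
  have hc₁ := (convex_proj_preimage_Ioo (1 : Fin 2) (-1) 1).starConvex hp.2
  refine ⟨max_le (hilbertDist_le_hilbertDist_inter ho₀ ho₁ hc₀ hc₁ hp hq) ?_,
    hilbertDist_inter_le_add ho₀ ho₁ hc₀ hc₁ hp hq⟩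
  rw [inter_comm]
  exact hilbertDist_le_hilbertDist_inter ho₁ ho₀ hc₁ hc₀ hp.symm hq.symm

end Square

/-- the Hilbert geometry of the open square is bi-Lipschitz equivalent to
the Euclidean plane: `Φ = (artanh, artanh)` is a bijection from the square onto `ℝ²` with
`(1/2)·|Φp − Φq| ≤ d(p,q) ≤ 2·|Φp − Φq|`. -/
theorem square_biLipschitz_plane :
    Set.BijOn sqMap square Set.univ ∧
      ∀ p ∈ square, ∀ q ∈ square,
        (1 / 2) * ‖sqMap p - sqMap q‖ ≤ hilbertDist square p q ∧
          hilbertDist square p q ≤ 2 * ‖sqMap p - sqMap q‖ := by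
  refine ⟨bijOn_sqMap, fun p hp q hq => ?_⟩
  obtain ⟨hmax, hsum⟩ := hilbertDist_square_bounds hp hq
  rw [max_le_iff] at hmax
  have hdist := PiLp.dist_le_sum_dist (sqMap p) (sqMap q)
  rw [Fin.sum_univ_two] at hdist
  have hle₀ := PiLp.dist_apply_le (sqMap p) (sqMap q) 0
  have hle₁ := PiLp.dist_apply_le (sqMap p) (sqMap q) 1
  rw [← dist_eq_norm]
  constructor <;> linarith
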